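/- arXiv:2307.09533 — 3 statements merged into one kernel-verified Lean document; each statement's English description precedes it below -/
import Mathlib

section
/- For each \delta \in (0,1) there is a constant K = K(\delta) such that the following holds. Let n \ge 2, d = \lfloor\delta n\rfloor \ge 1, and let G = (V,E) be a d-regular bipartite graph on N = 2n vertices. Then there exists a family \mathcal{C} \subseteq 2^{V} with |\mathcal{C}| \le n^{K} such that for every real t \ge 1 and every subset S \subseteq V with |\nabla(S)| \le t d, there is some C \in \mathcal{C} with |S \triangle C| \le 32 t and |\nabla(C)| \le 33 t d. -/
open scoped Classical

noncomputable section

variable {V : Type*}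

/-- The square of a graph: vertices at distance 1 or 2 are adjacent. -/
def gsq (G : SimpleGraph V) : SimpleGraph V where
  Adj u v := u ≠ v ∧ (G.Adj u v ∨ ∃ w, G.Adj u w ∧ G.Adj w v)
  symm := by
    constructor
    rintro u v ⟨h1, h2⟩
    refine ⟨h1.symm, ?_⟩
    rcases h2 with h | ⟨w, hw1, hw2⟩
    · exact Or.inl h.symm
    · exact Or.inr ⟨w, hw2.symm, hw1.symm⟩
  loopless := by constructor; rintro u ⟨h, -⟩; exact h rfl

/-- `A` is 2-linked: the subgraph of the square of `G` induced on `A` is connected. -/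
def TwoLinked (G : SimpleGraph V) (A : Finset V) : Prop :=
  ((gsq G).induce (A : Set V)).Connected

variable [Fintype V] [DecidableEq V]

/-- The neighborhood of a vertex, as a `Finset`. -/
def nbrF (G : SimpleGraph V) (v : V) : Finset V :=
  Finset.univ.filter (fun u => G.Adj v u)

/-- The neighborhood `N(A)` of a set of vertices. -/
def nbr (G : SimpleGraph V) (A : Finset V) : Finset V :=
  Finset.univ.filter (fun u => ∃ a ∈ A, G.Adj a u)

/-- The closure `[A] = {x ∈ X : N(x) ⊆ N(A)}` of `A` within the part `X`. -/
def cl (G : SimpleGraph V) (X A : Finset V) : Finset V :=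
  X.filter (fun x => nbrF G x ⊆ nbr G A)

/-- `A` is closed (within the part `X`) if `[A] = A`. -/
def IsClosedSet (G : SimpleGraph V) (X A : Finset V) : Prop :=
  cl G X A = A

/-- The 2-linked components of `A`: equivalence classes of the reachability
relation in the square of `G` restricted to `A`. -/
def comps (G : SimpleGraph V) (A : Finset V) : Finset (Finset V) :=
  A.image (fun a =>
    A.filter (fun b => Relation.ReflTransGen
      (fun u v => (gsq G).Adj u v ∧ u ∈ A ∧ v ∈ A) a b))

/-- The number of independent sets of `G` (including the empty set). -/
def numInd (G : SimpleGraph V) : ℕ :=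
  (Finset.univ.filter (fun s : Finset V => ∀ u ∈ s, ∀ v ∈ s, ¬ G.Adj u v)).card

/-- `A ⊆ X` is `t`-contracting if `|N(A)| < |[A]| + t`. -/
def Contracting (G : SimpleGraph V) (X : Finset V) (t : ℤ) (A : Finset V) : Prop :=
  ((nbr G A).card : ℤ) < ((cl G X A).card : ℤ) + t

/-- `D_A`: product over the 2-linked components `A'` of `A` of the number of
2-linked `B ⊆ A'` with `N(B) = N(A')`. -/
def DA (G : SimpleGraph V) (A : Finset V) : ℕ :=
  ∏ A' ∈ comps G A,
    (A'.powerset.filter (fun B => TwoLinked G B ∧ nbr G B = nbr G A')).card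

/-- The value `|∇(C)|` of the cut `C`: the number of edges with exactly one
endpoint in `C`. -/
def cutVal (G : SimpleGraph V) (C : Finset V) : ℕ :=
  ∑ u ∈ C, (nbrF G u \ C).card

/-- `B` is a polymer of `P_A` (a nonempty 2-linked subset of `X_A = X \ N²(A)`)
that is not `t0`-contracting. -/
def IsPolymerIn (G : SimpleGraph V) (X : Finset V) (t0 : ℤ) (A B : Finset V) : Prop :=
  B.Nonempty ∧ TwoLinked G B ∧ B ⊆ X \ nbr G (nbr G A) ∧ ¬ Contracting G X t0 B

/-- `Ξ_A`: sum over unordered compatible collections of non-`t0`-contracting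
polymers from `P_A` of `2^{-∑|N(B_i)|}`. -/
def Xi (G : SimpleGraph V) (X : Finset V) (t0 : ℤ) (A : Finset V) : ℝ :=
  ∑ F ∈ Finset.univ.filter (fun F : Finset (Finset V) =>
      (∀ B ∈ F, IsPolymerIn G X t0 A B) ∧
      (∀ B ∈ F, ∀ B' ∈ F, B ≠ B' → Disjoint (nbr G B) (nbr G B'))),
    ∏ B ∈ F, ((2:ℝ) ^ (nbr G B).card)⁻¹

/-- `𝒢(w,t)`: polymers `B ⊆ X` with `|N(B)| = w` and `|N(B)| - |[B]| = t`. -/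
def GG (G : SimpleGraph V) (X : Finset V) (w t : ℤ) : Finset (Finset V) :=
  X.powerset.filter (fun B => B.Nonempty ∧ TwoLinked G B ∧
    ((nbr G B).card : ℤ) = w ∧ ((nbr G B).card : ℤ) - ((cl G X B).card : ℤ) = t)

/-- `G` is bipartite with parts `X` and `Y`. -/
def IsBipartiteWith (G : SimpleGraph V) (X Y : Finset V) : Prop :=
  Disjoint X Y ∧ X ∪ Y = Finset.univ ∧
    ∀ u v, G.Adj u v → (u ∈ X ∧ v ∈ Y) ∨ (u ∈ Y ∧ v ∈ X)

/-- `G` is `d`-regular. -/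
def IsRegularDeg (G : SimpleGraph V) (d : ℕ) : Prop :=
  ∀ v, (nbrF G v).card = d

/-- `d_S(v)`: number of neighbors of `v` in `S`. -/
def degIn (G : SimpleGraph V) (v : V) (S : Finset V) : ℕ := (nbrF G v ∩ S).card

/-- `W_{d/2}`: vertices of `N(A)` with at least `d/2` neighbors in `A`. -/
def Wbig (G : SimpleGraph V) (d : ℕ) (A : Finset V) : Finset V :=
  (nbr G A).filter (fun y => (d : ℝ) / 2 ≤ (degIn G y A : ℝ))

/-- `F` is an essential set for `A`: `N(A) ⊇ F ⊇ W_{d/2}` and `N(F) ⊇ [A]`. -/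
def EssentialSet (G : SimpleGraph V) (X : Finset V) (d : ℕ) (A F : Finset V) : Prop :=
  F ⊆ nbr G A ∧ Wbig G d A ⊆ F ∧ cl G X A ⊆ nbr G F

/-- `(S,T)` is a `γ'`-container for `A`, where `t = |N(A)| - |[A]|`. -/
def IsContainer (G : SimpleGraph V) (X Y : Finset V) (d : ℕ) (γ' : ℝ)
    (A S T : Finset V) : Prop :=
  cl G X A ⊆ S ∧ Wbig G d A ⊆ T ∧ T ⊆ nbr G A ∧
  (∀ v ∈ S, (degIn G v (Y \ T) : ℝ) ≤
      γ' * (((nbr G A).card : ℝ) - ((cl G X A).card : ℝ))) ∧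
  (∀ v ∈ Y \ T, (degIn G v S : ℝ) ≤
      γ' * (((nbr G A).card : ℝ) - ((cl G X A).card : ℝ)))

/-!
Write `A = S ∩ X` and `B = S ∩ Y`. A sample of `s = ⌈1024 / δ³⌉` vertices of `X`, labelled by
membership in `A`, estimates `deg_A(y)` for every `y ∈ Y`. By Chebyshev's inequality, averaged
over all samples, the estimate is off by `d / 4` for at most `4n³ / (s d²)` vertices `y`; every
other `y` on which the rounded estimate disagrees with `B` carries `d / 4` edges of `∇(S)`. So some
sample recovers `B` up to `4|∇(S)| / d + d / 32` vertices, symmetrically for `A`, and there are only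
`n^O(s)` labelled samples. If `t ≥ d / 128` this error is `O(t)`. Otherwise it is below `d / 16`,
and a majority vote against the estimate of `B` recovers `A` up to `16t / 7` vertices, since a
vertex that the vote puts on the wrong side carries at least `7d / 16` edges of `∇(S)`. Finally,
moving one vertex across `C` changes `|∇(C)|` by at most `d`.
-/

open Finset
open scoped symmDiff

lemma card_filter_nsmul_le_sum {ι R : Type*} [AddCommMonoid R] [PartialOrder R]
    [IsOrderedAddMonoid R] (s : Finset ι) (p : ι → Prop) [DecidablePred p] {φ : ι → R} {c : R}
    (hφ : ∀ x ∈ s, 0 ≤ φ x) (hc : ∀ x ∈ s, p x → c ≤ φ x) :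
    #{x ∈ s | p x} • c ≤ ∑ x ∈ s, φ x :=
  (card_nsmul_le_sum _ _ _ fun x hx => hc x (mem_filter.1 hx).1 (mem_filter.1 hx).2).trans
    (sum_le_sum_of_subset_of_nonneg (filter_subset _ _) fun x hx _ => hφ x hx)

section Sampling

variable {α : Type*}

lemma sum_piFinset_mul_eq_zero {s : ℕ} (P : Finset α) {h : α → ℝ} (h0 : ∑ x ∈ P, h x = 0)
    (φ : α → ℝ) {i j : Fin s} (hij : i ≠ j) :
    ∑ f ∈ Fintype.piFinset fun _ : Fin s => P, h (f i) * φ (f j) = 0 := by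
  let F : Fin s → α → ℝ := fun k x => (if k = i then h x else 1) * (if k = j then φ x else 1)
  have hF (f : Fin s → α) : h (f i) * φ (f j) = ∏ k, F k (f k) := by
    simp only [F, prod_mul_distrib, Fintype.prod_ite_eq']
  simp_rw [hF, ← prod_univ_sum]
  exact prod_eq_zero (mem_univ i) (by simp [F, hij, h0])

/-- The variance of a sum of `s` independent uniform samples of a mean-zero function. -/
lemma sum_piFinset_sq_sum_eq {s : ℕ} (P : Finset α) {h : α → ℝ} (h0 : ∑ x ∈ P, h x = 0) :
    ∑ f ∈ Fintype.piFinset fun _ : Fin s => P, (∑ i, h (f i)) ^ 2 =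
      s * #P ^ (s - 1) * ∑ x ∈ P, h x ^ 2 := by
  have hdiag (i : Fin s) :
      ∑ j, ∑ f ∈ Fintype.piFinset fun _ : Fin s => P, h (f i) * h (f j) =
        #P ^ (s - 1) * ∑ x ∈ P, h x * h x := by
    rw [sum_eq_single i (fun j _ hji => sum_piFinset_mul_eq_zero P h0 h (Ne.symm hji))
      (by simp), Fintype.sum_piFinset_apply (fun x => h x * h x), Fintype.card_fin,
      nsmul_eq_mul, Nat.cast_pow]
  simp_rw [sq, Finset.sum_mul_sum]
  rw [sum_comm]
  simp_rw [sum_comm (γ := Fin s → α), hdiag]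
  simp [mul_assoc]

lemma sum_piFinset_sq_count_sub_le [DecidableEq α] {s : ℕ} {P W : Finset α}
    (hW : W ⊆ P) :
    ∑ f ∈ Fintype.piFinset fun _ : Fin s => P, ((#P : ℝ) * #{i | f i ∈ W} - s * #W) ^ 2 ≤
      s * #P ^ (s - 1) * #P ^ 3 / 4 := by
  let h : α → ℝ := fun x => #P * (if x ∈ W then 1 else 0) - #W
  have hf (f : Fin s → α) : ∑ i, h (f i) = #P * #{i | f i ∈ W} - s * #W := by
    simp only [h, sum_sub_distrib, ← mul_sum, sum_boole, sum_const, card_univ, Fintype.card_fin,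
      nsmul_eq_mul]
  have hPW : #{x ∈ P | x ∈ W} = #W := by rw [filter_mem_eq_inter, inter_eq_right.2 hW]
  have h0 : ∑ x ∈ P, h x = 0 := by
    simp only [h, sum_sub_distrib, ← mul_sum, sum_boole, hPW, sum_const, nsmul_eq_mul]
    ring
  have hsq : ∑ x ∈ P, h x ^ 2 = #P * #W * (#P - #W) := by
    have (x : α) : h x ^ 2 = (#P ^ 2 - 2 * #P * #W) * (if x ∈ W then 1 else 0) + (#W : ℝ) ^ 2 := by
      simp only [h]; split_ifs <;> ring
    simp only [this, sum_add_distrib, ← mul_sum, sum_boole, hPW, sum_const, nsmul_eq_mul]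
    ring
  have hWP : (#W : ℝ) ≤ #P := by exact_mod_cast card_le_card hW
  simp_rw [← hf]
  rw [sum_piFinset_sq_sum_eq P h0, hsq, mul_div_assoc]
  gcongr
  nlinarith [sq_nonneg ((#P : ℝ) - 2 * #W), Nat.cast_nonneg (α := ℝ) #W]

end Sampling

section Degrees

variable {G : SimpleGraph V}

lemma sum_degIn_comm (P Q : Finset V) :
    ∑ v ∈ P, degIn G v Q = ∑ u ∈ Q, degIn G u P := by
  have h (v : V) (S : Finset V) : degIn G v S = #{u ∈ S | G.Adj v u} := by
    unfold degIn nbrF; congr 1; grind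
  simp only [h, card_filter]
  rw [sum_comm]
  simp [G.adj_comm]

lemma degIn_le_degIn_add_card_sdiff (v : V) (B Q : Finset V) :
    degIn G v B ≤ degIn G v Q + #(B \ Q) := by
  refine (card_le_card fun u hu => ?_).trans (card_union_le (nbrF G v ∩ Q) (B \ Q))
  grind

lemma degIn_add_card_sdiff (v : V) (S : Finset V) :
    degIn G v S + #(nbrF G v \ S) = #(nbrF G v) := by
  rw [add_comm]; exact card_sdiff_add_card_inter _ _

lemma degIn_inter_of_nbrF_subset {v : V} {Y : Finset V} (h : nbrF G v ⊆ Y) (S : Finset V) :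
    degIn G v (S ∩ Y) = degIn G v S := by
  unfold degIn; congr 1; grind

lemma card_nbrF_sdiff_of_nbrF_subset {v : V} {X : Finset V} (h : nbrF G v ⊆ X) (S : Finset V) :
    #(nbrF G v \ S) = degIn G v (X \ S) := by
  unfold degIn; congr 1; grind

lemma cutVal_le_cutVal_add {d : ℕ} (hdeg : ∀ v, #(nbrF G v) ≤ d) (P C : Finset V) :
    cutVal G C ≤ cutVal G P + d * #(P ∆ C) := by
  have hsplit : ∀ u ∈ C ∩ P, #(nbrF G u \ C) ≤ #(nbrF G u \ P) + degIn G u (P \ C) :=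
    fun u _ => (card_le_card fun w hw => by grind [degIn]).trans (card_union_le _ _)
  have hout : ∑ u ∈ C ∩ P, degIn G u (P \ C) ≤ d * #(P \ C) :=
    calc ∑ u ∈ C ∩ P, degIn G u (P \ C) ≤ ∑ u, degIn G u (P \ C) :=
          sum_le_sum_of_subset (subset_univ _)
      _ = ∑ w ∈ P \ C, degIn G w univ := sum_degIn_comm _ _
      _ ≤ d * #(P \ C) := by
          rw [mul_comm]
          exact sum_le_card_nsmul _ _ _ fun w _ => (card_le_card inter_subset_left).trans (hdeg w)
  have hin : ∑ u ∈ C \ P, #(nbrF G u \ C) ≤ d * #(C \ P) := by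
    rw [mul_comm]
    exact sum_le_card_nsmul _ _ _ fun u _ => (card_le_card sdiff_subset).trans (hdeg u)
  have hP : ∑ u ∈ C ∩ P, #(nbrF G u \ P) ≤ cutVal G P :=
    sum_le_sum_of_subset inter_subset_right
  have hcard : #(P ∆ C) = #(P \ C) + #(C \ P) := card_union_of_disjoint disjoint_sdiff_sdiff
  calc cutVal G C = ∑ u ∈ C ∩ P, #(nbrF G u \ C) + ∑ u ∈ C \ P, #(nbrF G u \ C) :=
        (sum_inter_add_sum_sdiff _ _ _).symm
    _ ≤ ∑ u ∈ C ∩ P, (#(nbrF G u \ P) + degIn G u (P \ C)) + d * #(C \ P) :=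
        add_le_add (sum_le_sum hsplit) hin
    _ ≤ cutVal G P + d * #(P ∆ C) := by
        rw [sum_add_distrib, hcard]; nlinarith

end Degrees

section Bipartite

variable {G : SimpleGraph V} {X Y : Finset V}

lemma IsBipartiteWith.symm (h : IsBipartiteWith G X Y) : IsBipartiteWith G Y X :=
  ⟨h.1.symm, by rw [union_comm, h.2.1], fun u v huv => (h.2.2 u v huv).symm⟩

lemma IsBipartiteWith.nbrF_subset (h : IsBipartiteWith G X Y) {v : V} (hv : v ∈ X) :
    nbrF G v ⊆ Y := by
  intro u hu
  rcases h.2.2 v u (by simpa [nbrF] using hu) with ⟨-, huY⟩ | ⟨hvY, -⟩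
  · exact huY
  · exact absurd hvY (disjoint_left.1 h.1 hv)

lemma IsBipartiteWith.card_eq_add (h : IsBipartiteWith G X Y) :
    Fintype.card V = #X + #Y := by
  rw [← Finset.card_univ, ← h.2.1, card_union_of_disjoint h.1]

/-- The number of edges of the cut `∇(S)` at `v`. -/
def cutDeg (G : SimpleGraph V) (S : Finset V) (v : V) : ℕ :=
  if v ∈ S then #(nbrF G v \ S) else degIn G v S

/-- Every edge of `∇(S)` has exactly one endpoint in each part. -/
lemma IsBipartiteWith.cutVal_eq_sum_cutDeg (h : IsBipartiteWith G X Y) (S : Finset V) :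
    cutVal G S = ∑ x ∈ X, cutDeg G S x := by
  have hY : ∑ y ∈ S \ X, #(nbrF G y \ S) = ∑ x ∈ X \ S, degIn G x S := by
    have hSX : S \ X ⊆ Y := fun y hy => by
      have : y ∈ X ∪ Y := h.2.1 ▸ mem_univ y
      grind
    rw [sum_congr rfl fun y hy => card_nbrF_sdiff_of_nbrF_subset (h.symm.nbrF_subset (hSX hy)) S,
      sum_degIn_comm]
    refine sum_congr rfl fun x hx => ?_
    have hX : ∀ w ∈ nbrF G x, w ∉ X := fun w hw =>
      disjoint_right.1 h.1 (h.nbrF_subset (sdiff_subset hx) hw)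
    unfold degIn; congr 1
    grind
  rw [cutVal, ← sum_inter_add_sum_sdiff S X, hY]
  simp only [cutDeg, sum_ite, filter_mem_eq_inter, filter_notMem_eq_sdiff, inter_comm]

end Bipartite

section Refinement

variable {G : SimpleGraph V} {X Y : Finset V} {d : ℕ}

def majoritySet (G : SimpleGraph V) (d : ℕ) (X Q : Finset V) : Finset V :=
  {x ∈ X | d < 2 * degIn G x Q}

lemma le_two_mul_card_symmDiff_add_cutDeg (h : IsBipartiteWith G X Y)
    (hreg : ∀ x ∈ X, #(nbrF G x) = d) {S Q : Finset V} {x : V}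
    (hx : x ∈ (S ∩ X) ∆ majoritySet G d X Q) :
    d ≤ 2 * #((S ∩ Y) ∆ Q) + 2 * cutDeg G S x := by
  have hxX : x ∈ X := by grind [mem_symmDiff, majoritySet]
  have hSQ := degIn_le_degIn_add_card_sdiff (G := G) x (S ∩ Y) Q
  have hQS := degIn_le_degIn_add_card_sdiff (G := G) x Q (S ∩ Y)
  have h1 : #((S ∩ Y) \ Q) ≤ #((S ∩ Y) ∆ Q) := card_le_card subset_union_left
  have h2 : #(Q \ (S ∩ Y)) ≤ #((S ∩ Y) ∆ Q) := card_le_card subset_union_right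
  have hdeg := degIn_add_card_sdiff (G := G) x S
  rw [degIn_inter_of_nbrF_subset (h.nbrF_subset hxX)] at hSQ hQS
  rw [hreg x hxX] at hdeg
  rw [mem_symmDiff] at hx
  unfold cutDeg majoritySet at *
  grind

lemma mul_card_symmDiff_majoritySet_le (h : IsBipartiteWith G X Y)
    (hreg : ∀ x ∈ X, #(nbrF G x) = d) (S Q : Finset V) :
    d * #((S ∩ X) ∆ majoritySet G d X Q) ≤
      2 * #((S ∩ Y) ∆ Q) * #((S ∩ X) ∆ majoritySet G d X Q) + 2 * cutVal G S := by
  set D := (S ∩ X) ∆ majoritySet G d X Q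
  have hDX : D ⊆ X := fun x hx => by grind [mem_symmDiff, majoritySet]
  calc d * #D ≤ ∑ x ∈ D, (2 * #((S ∩ Y) ∆ Q) + 2 * cutDeg G S x) := by
        rw [mul_comm]
        exact card_nsmul_le_sum _ _ _ fun x hx => le_two_mul_card_symmDiff_add_cutDeg h hreg hx
    _ ≤ 2 * #((S ∩ Y) ∆ Q) * #D + 2 * ∑ x ∈ X, cutDeg G S x := by
        rw [sum_add_distrib, sum_const, smul_eq_mul, ← mul_sum, mul_comm #D]
        gcongr
    _ = _ := by rw [h.cutVal_eq_sum_cutDeg]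

end Refinement

section Seeds

variable {G : SimpleGraph V} {s n d : ℕ}

def seedCount (G : SimpleGraph V) {s : ℕ} (g : Fin s → V × Bool) (y : V) : ℕ :=
  #{i | (g i).2 ∧ (g i).1 ∈ nbrF G y}

/-- A seed is a sample of `s` vertices of the `n`-vertex part opposite to `Q`, each labelled by
whether it lies in the cut being approximated; `y` is selected when the labelled sample
estimates that more than `d / 2` of its neighbours carry the label. -/
def seedSet (G : SimpleGraph V) {s : ℕ} (n d : ℕ) (Q : Finset V) (g : Fin s → V × Bool) :
    Finset V :=
  {y ∈ Q | s * d < 2 * n * seedCount G g y}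

def labelSeed (S : Finset V) (f : Fin s → V) : Fin s → V × Bool :=
  fun i => (f i, decide (f i ∈ S))

/-- For `C` selected by a seed this is rare (Chebyshev); any other disagreement of `C` with `S`
at `y` costs `d / 4` edges of the cut. -/
def Misclassified (G : SimpleGraph V) (d : ℕ) (S C : Finset V) (y : V) : Prop :=
  y ∉ C ∧ 3 * d ≤ 4 * degIn G y S ∨ y ∈ C ∧ 4 * degIn G y S ≤ d

lemma seedCount_labelSeed (f : Fin s → V) (S : Finset V) (y : V) :
    seedCount G (labelSeed S f) y = #{i | f i ∈ nbrF G y ∩ S} := by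
  simp [seedCount, labelSeed, and_comm]

lemma sq_le_of_misclassified {Q S : Finset V} {f : Fin s → V} {y : V} (hy : y ∈ Q)
    (h : Misclassified G d S (seedSet G n d Q (labelSeed S f)) y) :
    ((s : ℝ) * d / 4) ^ 2 ≤ ((n : ℝ) * #{i | f i ∈ nbrF G y ∩ S} - s * degIn G y S) ^ 2 := by
  simp only [Misclassified, seedSet, mem_filter, seedCount_labelSeed, hy, true_and] at h
  have hsd : (0 : ℝ) ≤ s * d / 4 := by positivity
  rcases h with ⟨hc, hdeg⟩ | ⟨hc, hdeg⟩
  · have hc : (2 * n * #{i | f i ∈ nbrF G y ∩ S} : ℝ) ≤ s * d := by exact_mod_cast not_lt.1 hc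
    have hdeg : (3 * d : ℝ) ≤ 4 * degIn G y S := by exact_mod_cast hdeg
    have hgap : (s : ℝ) * d / 4 ≤ s * degIn G y S - n * #{i | f i ∈ nbrF G y ∩ S} := by
      nlinarith [mul_le_mul_of_nonneg_left hdeg (Nat.cast_nonneg (α := ℝ) s)]
    nlinarith
  · have hc : (s * d : ℝ) < 2 * n * #{i | f i ∈ nbrF G y ∩ S} := by exact_mod_cast hc
    have hdeg : (4 * degIn G y S : ℝ) ≤ d := by exact_mod_cast hdeg
    have hgap : (s : ℝ) * d / 4 ≤ n * #{i | f i ∈ nbrF G y ∩ S} - s * degIn G y S := by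
      nlinarith [mul_le_mul_of_nonneg_left hdeg (Nat.cast_nonneg (α := ℝ) s)]
    nlinarith

lemma card_misclassified_mul_le {P Q S : Finset V} (hP : #P = n) {y : V} (hy : y ∈ Q)
    (hyP : nbrF G y ⊆ P) :
    #{f ∈ Fintype.piFinset fun _ : Fin s => P |
        Misclassified G d S (seedSet G n d Q (labelSeed S f)) y} *
        ((s : ℝ) * d / 4) ^ 2 ≤ s * n ^ (s - 1) * n ^ 3 / 4 := by
  rw [← nsmul_eq_mul, ← hP]
  exact (card_filter_nsmul_le_sum _ _ (fun _ _ => sq_nonneg _)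
    fun _ _ hf => sq_le_of_misclassified hy hf).trans
    (sum_piFinset_sq_count_sub_le (inter_subset_left.trans hyP))

lemma exists_sample_card_misclassified_le {P Q S : Finset V} (hP : #P = n) (hn : 0 < n)
    (hs : 0 < s) (hd : 0 < d) (hQP : ∀ y ∈ Q, nbrF G y ⊆ P) :
    ∃ f : Fin s → V, (#{y ∈ Q |
        Misclassified G d S (seedSet G n d Q (labelSeed S f)) y} : ℝ) ≤
      4 * #Q * n ^ 2 / (s * d ^ 2) := by
  set F := Fintype.piFinset fun _ : Fin s => P
  set M := fun (f : Fin s → V) y =>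
    Misclassified G d S (seedSet G n d Q (labelSeed S f)) y
  have hF : (#F : ℝ) = n ^ s := by simp [F, hP]
  obtain ⟨x, hx⟩ := card_pos.1 (hP ▸ hn)
  have hFne : F.Nonempty := ⟨fun _ => x, Fintype.mem_piFinset.2 fun _ => hx⟩
  have hsd : (0 : ℝ) < s * d ^ 2 := by positivity
  have hy : ∀ y ∈ Q, (#{f ∈ F | M f y} : ℝ) ≤ 4 * n ^ (s + 2) / (s * d ^ 2) := by
    intro y hy
    have h := card_misclassified_mul_le (s := s) (d := d) (S := S) hP hy (hQP y hy)
    rw [show s + 2 = s - 1 + 3 by omega, pow_add, le_div_iff₀ hsd]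
    nlinarith
  have hsum : ∑ f ∈ F, (#{y ∈ Q | M f y} : ℝ) ≤ ∑ _f ∈ F, 4 * (#Q : ℝ) * n ^ 2 / (s * d ^ 2) :=
    calc ∑ f ∈ F, (#{y ∈ Q | M f y} : ℝ) = ∑ y ∈ Q, (#{f ∈ F | M f y} : ℝ) := by
          simp only [card_filter, Nat.cast_sum]; exact sum_comm
      _ ≤ ∑ _y ∈ Q, 4 * (n : ℝ) ^ (s + 2) / (s * d ^ 2) := sum_le_sum hy
      _ = _ := by rw [sum_const, sum_const, nsmul_eq_mul, nsmul_eq_mul, hF]; ring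
  obtain ⟨f, -, hf⟩ := exists_le_of_sum_le hFne hsum
  exact ⟨f, hf⟩

lemma mul_card_symmDiff_le_misclassified_add {Q S C : Finset V}
    (hQ : ∀ y ∈ Q, #(nbrF G y) = d) (hC : C ⊆ Q) :
    d * #((S ∩ Q) ∆ C) ≤
      d * #{y ∈ Q | Misclassified G d S C y} + 4 * ∑ y ∈ Q, cutDeg G S y := by
  have hsub : (S ∩ Q) ∆ C ⊆
      {y ∈ Q | Misclassified G d S C y} ∪ {y ∈ Q | d ≤ 4 * cutDeg G S y} := by
    intro y hy
    have hyQ : y ∈ Q := by grind [mem_symmDiff]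
    have hdeg := degIn_add_card_sdiff (G := G) y S
    rw [hQ y hyQ] at hdeg
    rw [mem_symmDiff] at hy
    simp only [mem_union, Misclassified, cutDeg]
    grind
  have hmarkov : #{y ∈ Q | d ≤ 4 * cutDeg G S y} • d ≤ ∑ y ∈ Q, 4 * cutDeg G S y :=
    card_filter_nsmul_le_sum _ _ (fun _ _ => Nat.zero_le _) fun _ _ h => h
  rw [smul_eq_mul, ← mul_sum] at hmarkov
  calc d * #((S ∩ Q) ∆ C)
      ≤ d * (#{y ∈ Q | Misclassified G d S C y} + #{y ∈ Q | d ≤ 4 * cutDeg G S y}) :=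
        Nat.mul_le_mul_left d ((card_le_card hsub).trans (card_union_le _ _))
    _ ≤ _ := by rw [mul_add, mul_comm d #{y ∈ Q | d ≤ _}]; omega

lemma exists_seed_mul_card_symmDiff_le {P Q S : Finset V} (hP : #P = n) (hn : 0 < n)
    (hs : 0 < s) (hd : 0 < d) (hQ : ∀ y ∈ Q, nbrF G y ⊆ P ∧ #(nbrF G y) = d) :
    ∃ g : Fin s → V × Bool, (d : ℝ) * #((S ∩ Q) ∆ seedSet G n d Q g) ≤
      4 * ∑ y ∈ Q, cutDeg G S y + 4 * #Q * n ^ 2 / (s * d) := by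
  obtain ⟨f, hf⟩ := exists_sample_card_misclassified_le (S := S) hP hn hs hd fun y hy => (hQ y hy).1
  refine ⟨labelSeed S f, ?_⟩
  set C := seedSet G n d Q (labelSeed S f)
  have h : (d : ℝ) * #((S ∩ Q) ∆ C) ≤
      d * #{y ∈ Q | Misclassified G d S C y} + 4 * (∑ y ∈ Q, cutDeg G S y : ℕ) := by
    exact_mod_cast
      mul_card_symmDiff_le_misclassified_add (fun y hy => (hQ y hy).2) (filter_subset _ Q)
  have hd' : (0 : ℝ) < d := by exact_mod_cast hd
  calc (d : ℝ) * #((S ∩ Q) ∆ C)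
      ≤ d * (4 * #Q * n ^ 2 / (s * d ^ 2)) + 4 * (∑ y ∈ Q, cutDeg G S y : ℕ) := by
        linarith [mul_le_mul_of_nonneg_left hf hd'.le]
    _ = _ := by field_simp; ring

end Seeds

section Covering

variable {G : SimpleGraph V} {X Y : Finset V} {s n d : ℕ}

lemma card_symmDiff_majoritySet_le (h : IsBipartiteWith G X Y) (hreg : IsRegularDeg G d)
    (hd : 0 < d) {S Q : Finset V} (hQ : 16 * #((S ∩ Y) ∆ Q) ≤ d) {t : ℝ}
    (hS : (cutVal G S : ℝ) ≤ t * d) :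
    (#((S ∩ X) ∆ majoritySet G d X Q) : ℝ) ≤ 16 / 7 * t := by
  have key : (d : ℝ) * #((S ∩ X) ∆ majoritySet G d X Q) ≤
      2 * #((S ∩ Y) ∆ Q) * #((S ∩ X) ∆ majoritySet G d X Q) + 2 * cutVal G S := by
    exact_mod_cast mul_card_symmDiff_majoritySet_le h (fun x _ => hreg x) S Q
  have hQ : (16 * #((S ∩ Y) ∆ Q) : ℝ) ≤ d := by exact_mod_cast hQ
  have hd : (0 : ℝ) < d := by exact_mod_cast hd
  have ha : (0 : ℝ) ≤ #((S ∩ X) ∆ majoritySet G d X Q) := Nat.cast_nonneg _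
  nlinarith

lemma exists_seed_card_symmDiff_le (h : IsBipartiteWith G X Y) (hreg : IsRegularDeg G d)
    (hX : #X = n) (hY : #Y = n) (hn : 0 < n) (hd : 0 < d) (hs : 128 * n ^ 3 ≤ s * d ^ 3)
    (S : Finset V) {t : ℝ} (hS : (cutVal G S : ℝ) ≤ t * d) :
    ∃ g : Fin s → V × Bool, (#((S ∩ Y) ∆ seedSet G n d Y g) : ℝ) ≤ 4 * t + d / 32 := by
  have hs0 : 0 < s := Nat.pos_of_ne_zero fun hs0 => by simp [hs0] at hs; omega
  obtain ⟨g, hg⟩ := exists_seed_mul_card_symmDiff_le (S := S) hX hn hs0 hd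
    fun y hy => ⟨h.symm.nbrF_subset hy, hreg y⟩
  refine ⟨g, ?_⟩
  rw [← h.symm.cutVal_eq_sum_cutDeg, hY] at hg
  have hd : (0 : ℝ) < d := by exact_mod_cast hd
  have hs : (128 * n ^ 3 : ℝ) ≤ s * d ^ 3 := by exact_mod_cast hs
  have herr : 4 * (n : ℝ) * n ^ 2 / (s * d) ≤ d ^ 2 / 32 := by
    rw [div_le_div_iff₀ (by positivity) (by norm_num)]
    nlinarith
  have : (d : ℝ) * #((S ∩ Y) ∆ seedSet G n d Y g) ≤ d * (4 * t + d / 32) := by nlinarith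
  exact le_of_mul_le_mul_left this hd

def candidates (G : SimpleGraph V) (n d s : ℕ) (X Y : Finset V) : Finset (Finset V) :=
  univ.biUnion fun g : (Fin s → V × Bool) × (Fin s → V × Bool) =>
    {seedSet G n d X g.1 ∪ seedSet G n d Y g.2,
      majoritySet G d X (seedSet G n d Y g.2) ∪ majoritySet G d Y (seedSet G n d X g.1)}

lemma card_candidates_le (hV : Fintype.card V = 2 * n) (hn : 2 ≤ n) :
    #(candidates G n d s X Y) ≤ n ^ (6 * s + 1) := by
  have h4n : 4 * n ≤ n ^ 3 :=
    calc 4 * n ≤ n * n * n := Nat.mul_le_mul_right n (Nat.mul_le_mul hn hn)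
      _ = n ^ 3 := by ring
  calc #(candidates G n d s X Y) ≤ (4 * n) ^ s * (4 * n) ^ s * 2 := by
        refine (card_biUnion_le_card_mul _ _ 2 fun _ _ => card_le_two).trans ?_
        simp only [card_univ, Fintype.card_prod, Fintype.card_pi, Fintype.card_bool, hV,
          prod_const, card_univ, Fintype.card_fin]
        ring_nf; rfl
    _ ≤ (n ^ 3) ^ s * (n ^ 3) ^ s * n := by gcongr
    _ = n ^ (6 * s + 1) := by ring

lemma card_symmDiff_union (hXY : Disjoint X Y) (hU : X ∪ Y = univ) {S CX CY : Finset V}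
    (hCX : CX ⊆ X) (hCY : CY ⊆ Y) :
    #(S ∆ (CX ∪ CY)) = #((S ∩ X) ∆ CX) + #((S ∩ Y) ∆ CY) := by
  rw [← card_union_of_disjoint]
  · congr 1
    ext v
    have : v ∈ X ∪ Y := hU ▸ mem_univ v
    have := disjoint_left.1 hXY
    grind [mem_symmDiff]
  · refine disjoint_left.2 fun v hvX hvY => disjoint_left.1 hXY (?_ : v ∈ X) (?_ : v ∈ Y) <;>
      grind [mem_symmDiff]

lemma exists_mem_candidates (h : IsBipartiteWith G X Y) (hreg : IsRegularDeg G d)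
    (hX : #X = n) (hY : #Y = n) (hn : 0 < n) (hd : 0 < d) (hs : 128 * n ^ 3 ≤ s * d ^ 3)
    (S : Finset V) {t : ℝ} (hS : (cutVal G S : ℝ) ≤ t * d) :
    ∃ C ∈ candidates G n d s X Y, (#(S ∆ C) : ℝ) ≤ 16 * t ∧ (cutVal G C : ℝ) ≤ 17 * t * d := by
  obtain ⟨gX, hgX⟩ := exists_seed_card_symmDiff_le h.symm hreg hY hX hn hd hs S hS
  obtain ⟨gY, hgY⟩ := exists_seed_card_symmDiff_le h hreg hX hY hn hd hs S hS
  have hdR : (0 : ℝ) < d := by exact_mod_cast hd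
  have ht : 0 ≤ t := nonneg_of_mul_nonneg_left ((Nat.cast_nonneg _).trans hS) hdR
  have cover : ∀ CX ⊆ X, ∀ CY ⊆ Y, ∀ a : ℝ,
      (#((S ∩ X) ∆ CX) + #((S ∩ Y) ∆ CY) : ℝ) ≤ a → a ≤ 16 * t →
      (#(S ∆ (CX ∪ CY)) : ℝ) ≤ 16 * t ∧ (cutVal G (CX ∪ CY) : ℝ) ≤ 17 * t * d := by
    intro CX hCX CY hCY a ha hat
    have hcard : (#(S ∆ (CX ∪ CY)) : ℝ) ≤ a := by
      rw [card_symmDiff_union h.1 h.2.1 hCX hCY]; exact_mod_cast ha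
    have hcut : (cutVal G (CX ∪ CY) : ℝ) ≤ cutVal G S + d * #(S ∆ (CX ∪ CY)) := by
      exact_mod_cast cutVal_le_cutVal_add (fun v => (hreg v).le) S (CX ∪ CY)
    exact ⟨hcard.trans hat, by nlinarith⟩
  by_cases hlarge : (d : ℝ) ≤ 128 * t
  · refine ⟨seedSet G n d X gX ∪ seedSet G n d Y gY, ?_,
      cover (seedSet G n d X gX) (filter_subset _ _) (seedSet G n d Y gY) (filter_subset _ _)
        (16 * t) (by linarith) le_rfl⟩
    exact mem_biUnion.2 ⟨(gX, gY), mem_univ _, by simp⟩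
  · have hm (Z : Finset V) (g : Fin s → V × Bool)
        (hg : (#((S ∩ Z) ∆ seedSet G n d Z g) : ℝ) ≤ 4 * t + d / 32) :
        16 * #((S ∩ Z) ∆ seedSet G n d Z g) ≤ d := by
      have : (16 * #((S ∩ Z) ∆ seedSet G n d Z g) : ℝ) ≤ d := by linarith
      exact_mod_cast this
    refine ⟨majoritySet G d X (seedSet G n d Y gY) ∪ majoritySet G d Y (seedSet G n d X gX), ?_,
      cover (majoritySet G d X (seedSet G n d Y gY)) (filter_subset _ _)
        (majoritySet G d Y (seedSet G n d X gX)) (filter_subset _ _) (32 / 7 * t) ?_ (by linarith)⟩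
    · exact mem_biUnion.2 ⟨(gX, gY), mem_univ _, by simp⟩
    · linarith [card_symmDiff_majoritySet_le h hreg hd (hm Y gY hgY) hS,
        card_symmDiff_majoritySet_le h.symm hreg hd (hm X gX hgX) hS]

end Covering

lemma mul_cube_le_ceil_mul_floor_cube {δ : ℝ} (hδ : 0 < δ) {n : ℕ} (hd : 1 ≤ ⌊δ * n⌋₊) :
    128 * n ^ 3 ≤ ⌈1024 / δ ^ 3⌉₊ * ⌊δ * n⌋₊ ^ 3 := by
  set d := ⌊δ * n⌋₊
  set s := ⌈1024 / δ ^ 3⌉₊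
  have hδn : δ * n ≤ 2 * d := by
    have := Nat.lt_floor_add_one (δ * n)
    have : (1 : ℝ) ≤ d := by exact_mod_cast hd
    linarith
  have hcube : (δ * n) ^ 3 ≤ (2 * d) ^ 3 := pow_le_pow_left₀ (by positivity) hδn 3
  have hs : 1024 ≤ s * δ ^ 3 := (div_le_iff₀ (by positivity)).1 (Nat.le_ceil _)
  have : (128 * n ^ 3 : ℝ) ≤ s * d ^ 3 := by
    nlinarith [mul_le_mul_of_nonneg_left hcube (Nat.cast_nonneg (α := ℝ) s),
      pow_nonneg (Nat.cast_nonneg (α := ℝ) n) 3]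
  exact_mod_cast this

/-- for each `δ ∈ (0,1)` there is `K = K(δ)` such that any
`⌊δn⌋`-regular bipartite graph on `2n` vertices admits a family `𝒞` of at most
`n^K` cuts such that every cut `S` with `|∇(S)| ≤ td` (`t ≥ 1` real) has some
`C ∈ 𝒞` with `|S △ C| ≤ 32t` and `|∇(C)| ≤ 33td`. -/
theorem stmt_4 (δ : ℝ) (hδ : δ ∈ Set.Ioo (0:ℝ) 1) :
    ∃ K : ℕ, ∀ (V : Type) [Fintype V] [DecidableEq V] (G : SimpleGraph V)
      (X Y : Finset V) (n d : ℕ),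
      2 ≤ n → d = ⌊δ * (n : ℝ)⌋₊ → 1 ≤ d →
      X.card = n → Y.card = n → IsBipartiteWith G X Y → IsRegularDeg G d →
      ∃ 𝒞 : Finset (Finset V), 𝒞.card ≤ n ^ K ∧
        ∀ t : ℝ, 1 ≤ t → ∀ S : Finset V, (cutVal G S : ℝ) ≤ t * d →
          ∃ C ∈ 𝒞, (((S \ C) ∪ (C \ S)).card : ℝ) ≤ 32 * t ∧
            (cutVal G C : ℝ) ≤ 33 * t * d := by
  refine ⟨6 * ⌈1024 / δ ^ 3⌉₊ + 1, fun V _ _ G X Y n d hn hd hd1 hX hY hbip hreg => ?_⟩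
  have hV : Fintype.card V = 2 * n := by rw [hbip.card_eq_add, hX, hY, two_mul]
  have hs : 128 * n ^ 3 ≤ ⌈1024 / δ ^ 3⌉₊ * d ^ 3 :=
    hd ▸ mul_cube_le_ceil_mul_floor_cube hδ.1 (hd ▸ hd1)
  refine ⟨candidates G n d _ X Y, card_candidates_le hV hn, fun t ht S hS => ?_⟩
  obtain ⟨C, hC, hSC, hCcut⟩ := exists_mem_candidates hbip hreg hX hY (by omega) hd1 hs S hS
  have hd0 : (0 : ℝ) ≤ d := Nat.cast_nonneg d
  exact ⟨C, hC, by rw [← Finset.symmDiff_def]; linarith, by nlinarith⟩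
end
end

section
/- Let G be a d-regular bipartite graph with parts X and Y, let c \ge 1 be a real number, let t be a positive integer, and let C \subseteq X \cup Y be a cut with value |\nabla(C)| \le t d. Set A' := C \cap X, W' := C \cap Y, and S_X := \{v \in X \setminus A' : |N(v) \setminus W'| \le 3ct\}. Then every closed t-contracting subset A \subseteq X with |A \triangle A'| \le ct satisfies A \setminus A' \subseteq S_X. -/
open scoped Classical

noncomputable section

variable {V : Type*}

variable [Fintype V] [DecidableEq V]

/-! Fix `v ∈ A \ A'` and let `K = N(v) \ W'`, a set of `k` vertices of `N(A)` outside the cut `C`.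
Each `y ∈ K` has its `d` neighbours in `A'`, in `A \ A'` or outside `A`. Edges from `K` to `A'`
cross the cut, so there are at most `td` of them; there are at most `k · ct` edges from `K` to
`A \ A'`; and since `A` is closed and `t`-contracting, at most `(t - 1)d` edges leave `A` from
`N(A)`. Hence `kd ≤ td + k·ct + (t - 1)d`, i.e. `k (d - ct) ≤ (2t - 1) d`, which together with
`k ≤ d` forces `k ≤ 3ct`. -/

namespace Finset

lemma card_le_card_inter_add_card_sdiff_add_card_sdiff {α : Type*} [DecidableEq α]
    (s A B : Finset α) : #s ≤ #(s ∩ B) + #(A \ B) + #(s \ A) := by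
  have hsA : s ∩ A ⊆ (s ∩ B) ∪ (A \ B) := by
    intro x hx
    simp only [mem_inter, mem_union, mem_sdiff] at hx ⊢
    tauto
  calc #s = #(s ∩ A) + #(s \ A) := (card_inter_add_card_sdiff s A).symm
    _ ≤ #(s ∩ B) + #(A \ B) + #(s \ A) := by
      gcongr
      exact (card_le_card hsA).trans (card_union_le _ _)

end Finset

open Finset

section Graph

variable {G : SimpleGraph V} {X Y A : Finset V}

omit [DecidableEq V] in
lemma nbrF_subset_nbr {a : V} (ha : a ∈ A) : nbrF G a ⊆ nbr G A := by
  intro u hu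
  simpa [nbr] using ⟨a, ha, (mem_filter.mp hu).2⟩

lemma IsClosedSet.subset (hA : IsClosedSet G X A) : A ⊆ X :=
  hA ▸ filter_subset _ _

lemma IsClosedSet.card_nbr_lt {t : ℕ} (hA : IsClosedSet G X A)
    (hcontr : Contracting G X t A) : #(nbr G A) < #A + t := by
  unfold Contracting at hcontr
  rw [hA] at hcontr
  omega

lemma IsBipartiteWith.mem_right_of_adj (hbip : IsBipartiteWith G X Y) {x y : V}
    (hx : x ∈ X) (hxy : G.Adj x y) : y ∈ Y := by
  rcases hbip.2.2 x y hxy with ⟨-, hy⟩ | ⟨hxY, -⟩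
  · exact hy
  · exact absurd hxY (disjoint_left.mp hbip.1 hx)

lemma sum_card_nbrF_inter_comm (P Q : Finset V) :
    ∑ y ∈ P, #(nbrF G y ∩ Q) = ∑ x ∈ Q, #(nbrF G x ∩ P) := by
  have key := sum_card_bipartiteAbove_eq_sum_card_bipartiteBelow (s := P) (t := Q) G.Adj
  simp only [bipartiteAbove, bipartiteBelow] at key
  convert key using 3 with y _ x _
  · ext; simp [nbrF, and_comm]
  · ext; simp [nbrF, G.adj_comm, and_comm]

lemma sum_card_nbrF_inter_le_cutVal {B C K : Finset V} (hB : B ⊆ C) (hK : Disjoint K C) :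
    ∑ y ∈ K, #(nbrF G y ∩ B) ≤ cutVal G C :=
  calc ∑ y ∈ K, #(nbrF G y ∩ B)
    _ = ∑ x ∈ B, #(nbrF G x ∩ K) := sum_card_nbrF_inter_comm K B
    _ ≤ ∑ x ∈ B, #(nbrF G x \ C) := by
      gcongr with x
      exact fun u hu =>
        mem_sdiff.mpr ⟨(mem_inter.mp hu).1, disjoint_left.mp hK (mem_inter.mp hu).2⟩
    _ ≤ ∑ x ∈ C, #(nbrF G x \ C) := sum_le_sum_of_subset hB

variable {d : ℕ}

lemma IsRegularDeg.sum_card_nbrF_sdiff_add (hreg : IsRegularDeg G d) (A : Finset V) :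
    ∑ y ∈ nbr G A, #(nbrF G y \ A) + #A * d = #(nbr G A) * d := by
  have hin : ∑ y ∈ nbr G A, #(nbrF G y ∩ A) = #A * d := by
    rw [sum_card_nbrF_inter_comm, sum_congr rfl fun a ha => by
      rw [inter_eq_left.mpr (nbrF_subset_nbr ha), hreg a], sum_const, smul_eq_mul]
  rw [← hin, ← sum_add_distrib, sum_congr rfl fun y _ => by
    rw [card_sdiff_add_card_inter, hreg y], sum_const, smul_eq_mul]

lemma IsRegularDeg.card_mul_add_le_of_cutVal_le (hreg : IsRegularDeg G d)
    {B C K : Finset V} {t : ℕ}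
    (hcut : cutVal G C ≤ t * d) (hnbr : #(nbr G A) < #A + t)
    (hB : B ⊆ C) (hKC : Disjoint K C) (hKA : K ⊆ nbr G A) :
    #K * d + d ≤ 2 * t * d + #K * #(A \ B) := by
  have hdeg :
      #K * d ≤ ∑ y ∈ K, #(nbrF G y ∩ B) + #K * #(A \ B) + ∑ y ∈ K, #(nbrF G y \ A) := by
    have := sum_le_sum fun y (_ : y ∈ K) =>
      card_le_card_inter_add_card_sdiff_add_card_sdiff (nbrF G y) A B
    simpa only [show ∀ y, #(nbrF G y) = d from hreg, sum_const, smul_eq_mul, sum_add_distrib]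
      using this
  have hcross := sum_card_nbrF_inter_le_cutVal (G := G) hB hKC
  have hleave : ∑ y ∈ K, #(nbrF G y \ A) + d ≤ t * d := by
    have hsub := sum_le_sum_of_subset (f := fun y => #(nbrF G y \ A)) hKA
    have hmul : #(nbr G A) * d + d ≤ #A * d + t * d := by
      simpa only [add_mul, one_mul] using
        Nat.mul_le_mul_right d (show #(nbr G A) + 1 ≤ #A + t from hnbr)
    have := hreg.sum_card_nbrF_sdiff_add A
    omega
  have h2td : 2 * t * d = t * d + t * d := by ring
  omega

end Graph

lemma le_three_mul_of_mul_add_le {k d s c t : ℝ} (hk : 0 ≤ k) (hkd : k ≤ d) (hc : 1 ≤ c)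
    (ht : 0 ≤ t) (hs : s ≤ c * t) (h : k * d + d ≤ 2 * t * d + k * s) : k ≤ 3 * c * t := by
  by_contra! hk3
  have hd : 3 * c * t < d := hk3.trans_le hkd
  nlinarith [mul_le_mul_of_nonneg_left hs hk, mul_nonneg (sub_nonneg.mpr hc) ht]

theorem stmt_7_general (G : SimpleGraph V) (X Y : Finset V) (d : ℕ)
    (hbip : IsBipartiteWith G X Y) (hreg : IsRegularDeg G d)
    (c : ℝ) (hc : 1 ≤ c) (t : ℕ)
    (C : Finset V) (hcut : cutVal G C ≤ t * d)
    (A : Finset V) (hclosed : IsClosedSet G X A)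
    (hcontr : Contracting G X (t : ℤ) A)
    (hsym : (((A \ (C ∩ X)) ∪ ((C ∩ X) \ A)).card : ℝ) ≤ c * t) :
    A \ (C ∩ X) ⊆ (X \ (C ∩ X)).filter
      (fun v => ((nbrF G v \ (C ∩ Y)).card : ℝ) ≤ 3 * c * t) := by
  intro v hv
  obtain ⟨hvA, hvC⟩ := mem_sdiff.mp hv
  have hvX := hclosed.subset hvA
  refine mem_filter.mpr ⟨mem_sdiff.mpr ⟨hvX, hvC⟩, ?_⟩
  set K := nbrF G v \ (C ∩ Y)
  have hKC : Disjoint K C := disjoint_left.mpr fun y hy hyC => by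
    obtain ⟨hvy, hyCY⟩ := mem_sdiff.mp hy
    exact hyCY (mem_inter.mpr ⟨hyC, hbip.mem_right_of_adj hvX ((mem_filter.mp hvy).2)⟩)
  have hcount := hreg.card_mul_add_le_of_cutVal_le (B := C ∩ X) hcut
    (hclosed.card_nbr_lt hcontr) inter_subset_left hKC (sdiff_subset.trans (nbrF_subset_nbr hvA))
  have hKd : #K ≤ d := hreg v ▸ card_le_card sdiff_subset
  have hAB : (#(A \ (C ∩ X)) : ℝ) ≤ c * t :=
    le_trans (by exact_mod_cast card_le_card subset_union_left) hsym
  exact le_three_mul_of_mul_add_le (k := #K) (d := d) (Nat.cast_nonneg _)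
    (by exact_mod_cast hKd) hc (Nat.cast_nonneg _) hAB (by exact_mod_cast hcount)

/-- with `A' = C ∩ X`, `W' = C ∩ Y` and
`S_X = {v ∈ X \ A' : |N(v) \ W'| ≤ 3ct}`, every closed `t`-contracting
`A ⊆ X` with `|A △ A'| ≤ ct` satisfies `A \ A' ⊆ S_X`. -/
theorem stmt_7 (G : SimpleGraph V) (X Y : Finset V) (d : ℕ)
    (hbip : IsBipartiteWith G X Y) (hreg : IsRegularDeg G d)
    (c : ℝ) (hc : 1 ≤ c) (t : ℕ) (ht : 0 < t)
    (C : Finset V) (hcut : cutVal G C ≤ t * d)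
    (A : Finset V) (hAX : A ⊆ X) (hclosed : IsClosedSet G X A)
    (hcontr : Contracting G X (t : ℤ) A)
    (hsym : (((A \ (C ∩ X)) ∪ ((C ∩ X) \ A)).card : ℝ) ≤ c * t) :
    A \ (C ∩ X) ⊆ (X \ (C ∩ X)).filter
      (fun v => ((nbrF G v \ (C ∩ Y)).card : ℝ) ≤ 3 * c * t) :=
  stmt_7_general G X Y d hbip hreg c hc t C hcut A hclosed hcontr hsym
end
end

section
/- Let G be a d-regular bipartite graph with parts X and Y of size n, let \gamma > 0, and let t_0 \ge 1 be an integer. Suppose that |\mathcal{G}(w,t)| \le 2^{w - \gamma t} for all integers t \ge t_0 and all integers w with 1 \le w \le n. Then for every closed A \subseteq X, 1 \le \Xi_A \le \exp\big( n \cdot 2^{-\gamma t_0} / (1 - 2^{-\gamma}) \big). -/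
open scoped Classical

noncomputable section

variable {V : Type*}

variable [Fintype V] [DecidableEq V]

/-! Bound `Ξ_A` by dropping compatibility: a sum over all families of polymers factorises as
`∏_B (1 + 2^{-|N(B)|}) ≤ exp (∑_B 2^{-|N(B)|})`. Group the polymers by `w = |N(B)|` and
`t = |N(B)| - |[B]| ≥ t₀`: each class contributes at most `|𝒢(w,t)| 2^{-w} ≤ 2^{-γt}`, and summing
over `1 ≤ w ≤ n` and the geometric series in `t` gives `n 2^{-γt₀} / (1 - 2^{-γ})`. -/

theorem subset_cl (G : SimpleGraph V) {X B : Finset V} (hB : B ⊆ X) : B ⊆ cl G X B := by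
  intro x hx
  simp only [cl, Finset.mem_filter]
  refine ⟨hB hx, fun u hu => ?_⟩
  simp only [nbrF, nbr, Finset.mem_filter, Finset.mem_univ, true_and] at hu ⊢
  exact ⟨x, hx, hu⟩

theorem IsBipartiteWith.nbr_subset {G : SimpleGraph V} {X Y : Finset V}
    (h : IsBipartiteWith G X Y) {B : Finset V} (hB : B ⊆ X) : nbr G B ⊆ Y := by
  intro u hu
  simp only [nbr, Finset.mem_filter, Finset.mem_univ, true_and] at hu
  obtain ⟨a, haB, hadj⟩ := hu
  rcases h.2.2 a u hadj with ⟨-, huY⟩ | ⟨haY, -⟩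
  · exact huY
  · exact absurd haY (Finset.disjoint_left.mp h.1 (hB haB))

namespace IsPolymerIn

variable {G : SimpleGraph V} {X A B : Finset V} {t0 : ℤ}

theorem subset (h : IsPolymerIn G X t0 A B) : B ⊆ X :=
  h.2.2.1.trans Finset.sdiff_subset

theorem one_le_card_cl (h : IsPolymerIn G X t0 A B) : 1 ≤ (cl G X B).card :=
  Finset.card_pos.mpr (h.1.mono (subset_cl G h.subset))

theorem card_cl_add_le (h : IsPolymerIn G X t0 A B) :
    ((cl G X B).card : ℤ) + t0 ≤ (nbr G B).card :=
  not_lt.mp h.2.2.2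

end IsPolymerIn

def polymers (G : SimpleGraph V) (X : Finset V) (t0 : ℤ) (A : Finset V) : Finset (Finset V) :=
  Finset.univ.filter (IsPolymerIn G X t0 A)

def sizeExcess (G : SimpleGraph V) (X B : Finset V) : ℕ × ℕ :=
  ((nbr G B).card, (nbr G B).card - (cl G X B).card)

section Xi

variable (G : SimpleGraph V) (X : Finset V) (t0 : ℤ) (A : Finset V)

theorem one_le_Xi : 1 ≤ Xi G X t0 A := by
  have hempty : (∅ : Finset (Finset V)) ∈ Finset.univ.filter (fun F : Finset (Finset V) =>
      (∀ B ∈ F, IsPolymerIn G X t0 A B) ∧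
      (∀ B ∈ F, ∀ B' ∈ F, B ≠ B' → Disjoint (nbr G B) (nbr G B'))) := by simp
  simpa [Xi] using Finset.single_le_sum
    (f := fun F : Finset (Finset V) => ∏ B ∈ F, ((2:ℝ) ^ (nbr G B).card)⁻¹)
    (fun F _ => Finset.prod_nonneg fun B _ => by positivity) hempty

theorem Xi_le_exp_sum :
    Xi G X t0 A ≤ Real.exp (∑ B ∈ polymers G X t0 A, ((2:ℝ) ^ (nbr G B).card)⁻¹) := by
  calc Xi G X t0 A
      ≤ ∑ F ∈ (polymers G X t0 A).powerset, ∏ B ∈ F, ((2:ℝ) ^ (nbr G B).card)⁻¹ := by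
        refine Finset.sum_le_sum_of_subset_of_nonneg (fun F hF => ?_)
          (fun F _ _ => Finset.prod_nonneg fun B _ => by positivity)
        simp only [Finset.mem_filter, Finset.mem_univ, true_and] at hF
        simpa [Finset.subset_iff, polymers] using hF.1
    _ = ∏ B ∈ polymers G X t0 A, (1 + ((2:ℝ) ^ (nbr G B).card)⁻¹) :=
        (Finset.prod_one_add _).symm
    _ ≤ _ := Real.prod_one_add_le_exp_sum _ fun B => by positivity

end Xi

theorem two_rpow_sub_mul_inv_pow (γ : ℝ) (w t : ℕ) :
    (2:ℝ) ^ ((w : ℝ) - γ * t) * ((2:ℝ) ^ w)⁻¹ = ((2:ℝ) ^ (-γ)) ^ t := by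
  rw [Real.rpow_sub two_pos, ← Real.rpow_mul_natCast zero_le_two, neg_mul,
    Real.rpow_neg zero_le_two, ← Real.rpow_natCast 2 w]
  field_simp

theorem geom_sum_Icc_le_of_lt_one {r : ℝ} (hr : 0 ≤ r) (hr1 : r < 1) (a b : ℕ) :
    ∑ t ∈ Finset.Icc a b, r ^ t ≤ r ^ a / (1 - r) := by
  rw [← Finset.Ico_add_one_right_eq_Icc]
  exact geom_sum_Ico_le_of_lt_one hr hr1

section WeightBound

variable {G : SimpleGraph V} {X Y : Finset V} {n : ℕ} {γ : ℝ} {t0 : ℕ}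
  (hGG : ∀ t : ℤ, (t0 : ℤ) ≤ t → ∀ w : ℤ, 1 ≤ w → w ≤ (n : ℤ) →
    ((GG G X w t).card : ℝ) ≤ (2:ℝ) ^ ((w : ℝ) - γ * (t : ℝ)))
include hGG

theorem sum_fiber_polymers_le (A : Finset V) {w t : ℕ} (hw : w ∈ Finset.Icc 1 n)
    (ht : t ∈ Finset.Icc t0 n) :
    ∑ B ∈ (polymers G X t0 A).filter (fun B => sizeExcess G X B = (w, t)),
      ((2:ℝ) ^ (nbr G B).card)⁻¹ ≤ ((2:ℝ) ^ (-γ)) ^ t := by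
  rw [Finset.mem_Icc] at hw ht
  set fiber := (polymers G X t0 A).filter (fun B => sizeExcess G X B = (w, t))
  have hfiber : fiber ⊆ GG G X w t := by
    intro B hB
    simp only [fiber, polymers, sizeExcess, Finset.mem_filter, Finset.mem_univ, true_and,
      Prod.mk.injEq] at hB
    obtain ⟨hpoly, hN, hexcess⟩ := hB
    have := hpoly.card_cl_add_le
    simp only [GG, Finset.mem_filter, Finset.mem_powerset]
    exact ⟨hpoly.subset, hpoly.1, hpoly.2.1, by omega, by omega⟩
  have hweight : ∀ B ∈ fiber, ((2:ℝ) ^ (nbr G B).card)⁻¹ = ((2:ℝ) ^ w)⁻¹ := by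
    intro B hB
    simp only [fiber, sizeExcess, Finset.mem_filter, Prod.mk.injEq] at hB
    rw [hB.2.1]
  calc ∑ B ∈ fiber, ((2:ℝ) ^ (nbr G B).card)⁻¹
      = fiber.card * ((2:ℝ) ^ w)⁻¹ := by
        rw [Finset.sum_congr rfl hweight, Finset.sum_const, nsmul_eq_mul]
    _ ≤ (GG G X w t).card * ((2:ℝ) ^ w)⁻¹ := by
        gcongr
    _ ≤ (2:ℝ) ^ ((w : ℝ) - γ * t) * ((2:ℝ) ^ w)⁻¹ := by
        gcongr
        exact_mod_cast hGG t (by exact_mod_cast ht.1) w (by exact_mod_cast hw.1)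
          (by exact_mod_cast hw.2)
    _ = ((2:ℝ) ^ (-γ)) ^ t := two_rpow_sub_mul_inv_pow γ w t

theorem sum_polymers_weight_le (hY : Y.card = n) (hbip : IsBipartiteWith G X Y) (hγ : 0 < γ)
    (A : Finset V) :
    ∑ B ∈ polymers G X t0 A, ((2:ℝ) ^ (nbr G B).card)⁻¹ ≤
      n * ((2:ℝ) ^ (-γ)) ^ t0 / (1 - (2:ℝ) ^ (-γ)) := by
  have hmaps : ∀ B ∈ polymers G X t0 A,
      sizeExcess G X B ∈ Finset.Icc 1 n ×ˢ Finset.Icc t0 n := by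
    intro B hB
    have hpoly : IsPolymerIn G X t0 A B := (Finset.mem_filter.mp hB).2
    have hNn : (nbr G B).card ≤ n := hY ▸ Finset.card_le_card (hbip.nbr_subset hpoly.subset)
    have := hpoly.one_le_card_cl
    have := hpoly.card_cl_add_le
    simp only [sizeExcess, Finset.mem_product, Finset.mem_Icc]
    omega
  have hr : (2:ℝ) ^ (-γ) < 1 := Real.rpow_lt_one_of_one_lt_of_neg one_lt_two (neg_lt_zero.mpr hγ)
  calc ∑ B ∈ polymers G X t0 A, ((2:ℝ) ^ (nbr G B).card)⁻¹
      = ∑ p ∈ Finset.Icc 1 n ×ˢ Finset.Icc t0 n,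
          ∑ B ∈ (polymers G X t0 A).filter (fun B => sizeExcess G X B = p),
            ((2:ℝ) ^ (nbr G B).card)⁻¹ :=
        (Finset.sum_fiberwise_of_maps_to hmaps _).symm
    _ ≤ ∑ p ∈ Finset.Icc 1 n ×ˢ Finset.Icc t0 n, ((2:ℝ) ^ (-γ)) ^ p.2 :=
        Finset.sum_le_sum fun p hp =>
          sum_fiber_polymers_le hGG A (Finset.mem_product.mp hp).1 (Finset.mem_product.mp hp).2
    _ = n * ∑ t ∈ Finset.Icc t0 n, ((2:ℝ) ^ (-γ)) ^ t := by
        rw [Finset.sum_product]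
        simp only [Finset.sum_const, Nat.card_Icc, nsmul_eq_mul, Nat.add_sub_cancel]
    _ ≤ n * (((2:ℝ) ^ (-γ)) ^ t0 / (1 - (2:ℝ) ^ (-γ))) := by
        gcongr
        exact geom_sum_Icc_le_of_lt_one (by positivity) hr t0 n
    _ = _ := (mul_div_assoc _ _ _).symm

end WeightBound

theorem stmt_13_general (G : SimpleGraph V) (X Y : Finset V) (n : ℕ)
    (hY : Y.card = n)
    (hbip : IsBipartiteWith G X Y)
    (γ : ℝ) (hγ : 0 < γ) (t0 : ℕ)
    (hGG : ∀ t : ℤ, (t0 : ℤ) ≤ t → ∀ w : ℤ, 1 ≤ w → w ≤ (n : ℤ) →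
      ((GG G X w t).card : ℝ) ≤ (2:ℝ) ^ ((w : ℝ) - γ * (t : ℝ)))
    (A : Finset V) :
    1 ≤ Xi G X (t0 : ℤ) A ∧
    Xi G X (t0 : ℤ) A ≤
      Real.exp ((n : ℝ) * (2:ℝ) ^ (-(γ * (t0 : ℝ))) / (1 - (2:ℝ) ^ (-γ))) := by
  refine ⟨one_le_Xi G X t0 A, (Xi_le_exp_sum G X t0 A).trans ?_⟩
  rw [Real.exp_le_exp, ← neg_mul, Real.rpow_mul_natCast zero_le_two]
  exact sum_polymers_weight_le hGG hY hbip hγ A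

/-- if `|𝒢(w,t)| ≤ 2^{w-γt}` for all integers `t ≥ t₀` and
`1 ≤ w ≤ n`, then for every closed `A ⊆ X`,
`1 ≤ Ξ_A ≤ exp(n · 2^{-γt₀}/(1 - 2^{-γ}))`. -/
theorem stmt_13 (G : SimpleGraph V) (X Y : Finset V) (n d : ℕ)
    (hX : X.card = n) (hY : Y.card = n)
    (hbip : IsBipartiteWith G X Y) (hreg : IsRegularDeg G d)
    (γ : ℝ) (hγ : 0 < γ) (t0 : ℕ) (ht0 : 1 ≤ t0)
    (hGG : ∀ t : ℤ, (t0 : ℤ) ≤ t → ∀ w : ℤ, 1 ≤ w → w ≤ (n : ℤ) →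
      ((GG G X w t).card : ℝ) ≤ (2:ℝ) ^ ((w : ℝ) - γ * (t : ℝ)))
    (A : Finset V) (hAX : A ⊆ X) (hclosed : IsClosedSet G X A) :
    1 ≤ Xi G X (t0 : ℤ) A ∧
    Xi G X (t0 : ℤ) A ≤
      Real.exp ((n : ℝ) * (2:ℝ) ^ (-(γ * (t0 : ℝ))) / (1 - (2:ℝ) ^ (-γ))) :=
  stmt_13_general G X Y n hY hbip γ hγ t0 hGG A
end
end
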